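/- arXiv:2502.10472 — 2 statements merged into one kernel-verified Lean document; each statement's English description precedes it below -/
import Mathlib

section
/- Let N ≥ 3, let Γ₁,…,Γ_N be nonzero real numbers with Γ₂ + Γ₃ ≠ 0, let a, b ∈ ℂ be nonzero, and let Λ ∈ ℂ with |Λ| = 1 satisfy −conj(Λ)·(a/b) = (Γ₂Γ₃ + (Γ₂+Γ₃)·∑_{j∉{2,3}} Γ_j)/(Γ₂+Γ₃) and −Λ·(a/b) = (Γ₁Γ₂ + Γ₁Γ₃ + Γ₂Γ₃)/(Γ₂+Γ₃). Then Λ ∈ {1, −1, i, −i}. Moreover: (a) if Λ = 1 or Λ = −1, then ∑_{j=4}^N Γ_j = 0; (b) if Λ = i or Λ = −i and additionally ∑_{1≤j<k≤N} Γ_j·Γ_k = 0, then Γ₁Γ₂ + Γ₁Γ₃ + Γ₂Γ₃ = ∑_{4≤j<k≤N} Γ_j·Γ_k + Γ₁·∑_{j=4}^N Γ_j. -/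
open Finset ComplexConjugate

/-!
Since `‖Λ‖ = 1` we have `conj Λ = Λ⁻¹`, so the two relations give `Λ² · r₁ = r₂` for their real
right-hand sides `r₁, r₂`, with `r₁ ≠ 0`; hence `Λ² = r₂ / r₁` is a real number of modulus one,
i.e. `Λ² = ±1`. The right-hand sides satisfy `r₁ = r₂ + ∑_{j≥4} Γ_j`, which gives (a) when
`Λ² = 1`. When `Λ² = -1` they are opposite, so `2 L₁₂₃ + (Γ₂ + Γ₃) ∑_{j≥4} Γ_j = 0`, and (b) follows
from `L = L₁₂₃ + (Γ₁ + Γ₂ + Γ₃) ∑_{j≥4} Γ_j + L_{4…N}`.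
-/

section PairSum

variable {ι R : Type*} [LinearOrder ι] [CommSemiring R]

/-- `L_J` in the paper's notation. -/
def pairSum (s : Finset ι) (f : ι → R) : R :=
  ∑ j ∈ s, ∑ k ∈ s with j < k, f j * f k

theorem pairSum_insert_of_forall_lt {s : Finset ι} {i : ι} (hi : ∀ k ∈ s, i < k) (f : ι → R) :
    pairSum (insert i s) f = f i * ∑ k ∈ s, f k + pairSum s f := by
  have his : i ∉ s := fun h => (hi i h).false
  have hfilter_i : (insert i s).filter (i < ·) = s := by
    rw [filter_insert, if_neg (lt_irrefl i), filter_true_of_mem hi]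
  have hfilter_j : ∀ j ∈ s, (insert i s).filter (j < ·) = s.filter (j < ·) := fun j hj => by
    rw [filter_insert, if_neg (hi j hj).asymm]
  rw [pairSum, sum_insert his, hfilter_i, mul_sum, pairSum]
  congr 1
  exact sum_congr rfl fun j hj => by rw [hfilter_j j hj]

theorem pairSum_insert_insert_insert {s : Finset ι} {i₁ i₂ i₃ : ι} (h₁₂ : i₁ < i₂) (h₂₃ : i₂ < i₃)
    (hs : ∀ k ∈ s, i₃ < k) (f : ι → R) :
    pairSum (insert i₁ (insert i₂ (insert i₃ s))) f =
      f i₁ * f i₂ + f i₁ * f i₃ + f i₂ * f i₃ + (f i₁ + f i₂ + f i₃) * ∑ k ∈ s, f k +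
        pairSum s f := by
  have hs₂ : ∀ k ∈ insert i₃ s, i₂ < k :=
    forall_mem_insert _ _ _ |>.2 ⟨h₂₃, fun k hk => h₂₃.trans (hs k hk)⟩
  have hs₁ : ∀ k ∈ insert i₂ (insert i₃ s), i₁ < k :=
    forall_mem_insert _ _ _ |>.2 ⟨h₁₂, fun k hk => h₁₂.trans (hs₂ k hk)⟩
  rw [pairSum_insert_of_forall_lt hs₁, pairSum_insert_of_forall_lt hs₂,
    pairSum_insert_of_forall_lt hs, sum_insert (fun h => (hs₂ _ h).false),
    sum_insert (fun h => (hs _ h).false)]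
  ring

theorem sum_filter_lt_and_eq_pairSum [Fintype ι] {p : ι → Prop} [DecidablePred p]
    (hp : ∀ j k, p j → j < k → p k) (f : ι → R) :
    ∑ j, ∑ k with j < k ∧ p j, f j * f k = pairSum (univ.filter p) f := by
  rw [pairSum, sum_filter]
  refine sum_congr rfl fun j _ => ?_
  split_ifs with hj
  · congr 1
    ext k
    simp only [mem_filter, mem_univ, true_and, hj, and_true]
    exact ⟨fun h => ⟨hp j k hj h, h⟩, And.right⟩
  · simp [hj]

end PairSum

namespace Fin

variable {N : ℕ}

theorem univ_eq_insert_filter_three_le (hN : 2 < N) :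
    (univ : Finset (Fin N)) = insert ⟨0, by omega⟩ (insert ⟨1, by omega⟩
      (insert ⟨2, by omega⟩ (univ.filter (fun j : Fin N => 3 ≤ (j : ℕ))))) := by
  ext j
  simp only [mem_univ, mem_insert, mem_filter, true_and, Fin.ext_iff, true_iff]
  omega

theorem filter_ne_one_and_ne_two (hN : 2 < N) :
    univ.filter (fun j : Fin N => j ≠ ⟨1, by omega⟩ ∧ j ≠ ⟨2, by omega⟩) =
      insert ⟨0, by omega⟩ (univ.filter (fun j : Fin N => 3 ≤ (j : ℕ))) := by
  ext j
  simp only [mem_filter, mem_univ, true_and, mem_insert, Fin.ext_iff, ne_eq]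
  omega

end Fin

namespace Complex

theorem sq_mul_eq_of_neg_conj_mul_eq {Λ w x y : ℂ} (hΛ : ‖Λ‖ = 1) (hx : -conj Λ * w = x)
    (hy : -Λ * w = y) : Λ ^ 2 * x = y := by
  have hconj : Λ * conj Λ = 1 := by rw [mul_conj, normSq_eq_norm_sq, hΛ]; norm_num
  linear_combination -Λ ^ 2 * hx + hy - Λ * w * hconj

theorem sq_eq_one_or_neg_one_of_neg_conj_mul_eq {Λ w : ℂ} {x y : ℝ} (hΛ : ‖Λ‖ = 1) (hw : w ≠ 0)
    (hx : -conj Λ * w = x) (hy : -Λ * w = y) : Λ ^ 2 = 1 ∨ Λ ^ 2 = -1 := by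
  have hx₀ : x ≠ 0 := by
    rintro rfl
    have hΛ₀ : Λ ≠ 0 := norm_ne_zero_iff.1 (hΛ ▸ one_ne_zero)
    simp [hΛ₀, hw] at hx
  have hΛy : Λ ^ 2 = ((y / x : ℝ) : ℂ) := by
    rw [ofReal_div, eq_div_iff (ofReal_ne_zero.2 hx₀), sq_mul_eq_of_neg_conj_mul_eq hΛ hx hy]
  have habs : |y / x| = 1 := by
    rw [← Real.norm_eq_abs, ← norm_real, ← hΛy, norm_pow, hΛ, one_pow]
  rw [hΛy]
  rcases abs_eq zero_le_one |>.1 habs with h | h <;> simp [h]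

theorem eq_one_or_neg_one_or_I_or_neg_I_of_sq {z : ℂ} (h : z ^ 2 = 1 ∨ z ^ 2 = -1) :
    z = 1 ∨ z = -1 ∨ z = I ∨ z = -I := by
  rcases h with h | h
  · exact (sq_eq_one_iff.1 h).elim Or.inl (Or.inr ∘ Or.inl)
  · rw [← I_sq, sq_eq_sq_iff_eq_or_eq_neg] at h
    exact Or.inr (Or.inr h)

end Complex

/-- Proposition 4.6 (algebraic content): isolated triangle of z-strokes with
vertices 1, 2, 3 (indices ⟨0⟩, ⟨1⟩, ⟨2⟩), where 2 and 3 are z-circled. -/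
theorem isolated_z_triangle
    (N : ℕ) (hN : 3 ≤ N) (Γ : Fin N → ℝ)
    (h23 : Γ ⟨1, by omega⟩ + Γ ⟨2, by omega⟩ ≠ 0)
    (a b : ℂ) (ha : a ≠ 0) (hb : b ≠ 0)
    (Λ : ℂ) (hΛ : ‖Λ‖ = 1)
    (h1 : -((starRingEnd ℂ) Λ) * (a / b) =
      (((Γ ⟨1, by omega⟩ * Γ ⟨2, by omega⟩ +
          (Γ ⟨1, by omega⟩ + Γ ⟨2, by omega⟩) *
            ∑ j ∈ Finset.univ.filter
              (fun j : Fin N => j ≠ ⟨1, by omega⟩ ∧ j ≠ ⟨2, by omega⟩), Γ j) /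
        (Γ ⟨1, by omega⟩ + Γ ⟨2, by omega⟩) : ℝ) : ℂ))
    (h2 : -Λ * (a / b) =
      (((Γ ⟨0, by omega⟩ * Γ ⟨1, by omega⟩ + Γ ⟨0, by omega⟩ * Γ ⟨2, by omega⟩ +
          Γ ⟨1, by omega⟩ * Γ ⟨2, by omega⟩) /
        (Γ ⟨1, by omega⟩ + Γ ⟨2, by omega⟩) : ℝ) : ℂ)) :
    (Λ = 1 ∨ Λ = -1 ∨ Λ = Complex.I ∨ Λ = -Complex.I) ∧
    ((Λ = 1 ∨ Λ = -1) →
      ∑ j ∈ Finset.univ.filter (fun j : Fin N => 3 ≤ (j : ℕ)), Γ j = 0) ∧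
    ((Λ = Complex.I ∨ Λ = -Complex.I) →
      (∑ j : Fin N, ∑ k ∈ Finset.univ.filter (fun k => j < k), Γ j * Γ k) = 0 →
      Γ ⟨0, by omega⟩ * Γ ⟨1, by omega⟩ + Γ ⟨0, by omega⟩ * Γ ⟨2, by omega⟩ +
          Γ ⟨1, by omega⟩ * Γ ⟨2, by omega⟩ =
        (∑ j : Fin N, ∑ k ∈ Finset.univ.filter (fun k => j < k ∧ 3 ≤ (j : ℕ)),
          Γ j * Γ k) +
        Γ ⟨0, by omega⟩ *
          ∑ j ∈ Finset.univ.filter (fun j : Fin N => 3 ≤ (j : ℕ)), Γ j) := by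
  set B := univ.filter (fun j : Fin N => 3 ≤ (j : ℕ))
  set σ := ∑ j ∈ B, Γ j
  set x₁ := Γ ⟨0, by omega⟩
  set x₂ := Γ ⟨1, by omega⟩
  set x₃ := Γ ⟨2, by omega⟩
  set ρ := (x₁ * x₂ + x₁ * x₃ + x₂ * x₃) / (x₂ + x₃) with hρ
  have hr : (x₂ * x₃ + (x₂ + x₃) * (x₁ + σ)) / (x₂ + x₃) = ρ + σ := by
    rw [hρ]
    field_simp
    ring
  rw [Fin.filter_ne_one_and_ne_two hN, sum_insert (by simp), hr] at h1
  have hsq : Λ ^ 2 * ((ρ + σ : ℝ) : ℂ) = ρ := Complex.sq_mul_eq_of_neg_conj_mul_eq hΛ h1 h2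
  refine ⟨Complex.eq_one_or_neg_one_or_I_or_neg_I_of_sq
    (Complex.sq_eq_one_or_neg_one_of_neg_conj_mul_eq hΛ (div_ne_zero ha hb) h1 h2), ?_, ?_⟩
  · intro hΛ₁
    have hΛsq : Λ ^ 2 = 1 := by rcases hΛ₁ with rfl | rfl <;> norm_num
    rw [hΛsq, one_mul, Complex.ofReal_inj] at hsq
    linarith
  · intro hΛI hL
    have hΛsq : Λ ^ 2 = -1 := by rcases hΛI with rfl | rfl <;> simp
    rw [hΛsq, neg_one_mul, ← Complex.ofReal_neg, Complex.ofReal_inj] at hsq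
    have hρS : ρ * (x₂ + x₃) = x₁ * x₂ + x₁ * x₃ + x₂ * x₃ := div_mul_cancel₀ _ h23
    change pairSum univ Γ = 0 at hL
    rw [Fin.univ_eq_insert_filter_three_le hN, pairSum_insert_insert_insert
      (by simp [Fin.lt_def]) (by simp [Fin.lt_def]) (by simp [Fin.lt_def]; omega)] at hL
    rw [sum_filter_lt_and_eq_pairSum fun j k hj hjk => hj.trans (Fin.lt_def.1 hjk).le]
    linear_combination -hL - (x₂ + x₃) * hsq - 2 * hρS
end

section
/- Let Γ₁, Γ₂, Γ₃ be nonzero real numbers with Γ₁ + Γ₂ + Γ₃ = 0, and let t ∈ ℂ be nonzero. Define w₁₂ = Γ₃·t, w₂₃ = Γ₁·t, w₃₁ = Γ₂·t, and w_{kj} = −w_{jk} for each pair. Then the three complex numbers Γ₂/w₂₁ + Γ₃/w₃₁, Γ₁/w₁₂ + Γ₃/w₃₂, and Γ₁/w₁₃ + Γ₂/w₂₃ cannot all be equal. -/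
/-! Each of the three quantities equals `(x / y - y / x) / t` for a ratio `x / y` of circulations,
so already the first equality is a real equation between the circulations. Eliminating
`Γ₃ = -(Γ₁ + Γ₂)` turns it into `(Γ₁ + Γ₂) (Γ₁² + Γ₁Γ₂ + Γ₂²) = 0`, and neither factor can vanish:
the first is `-Γ₃`, the second is a positive definite quadratic form. -/

theorem sq_add_mul_add_sq_pos {K : Type*} [Field K] [LinearOrder K] [IsStrictOrderedRing K]
    {a : K} (b : K) (ha : a ≠ 0) : 0 < a ^ 2 + a * b + b ^ 2 := by
  nlinarith [sq_pos_of_ne_zero ha, sq_nonneg (a + 2 * b)]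

theorem div_sub_div_ne_div_sub_div {K : Type*} [Field K] [LinearOrder K] [IsStrictOrderedRing K]
    {a b c : K} (ha : a ≠ 0) (hb : b ≠ 0) (hc : c ≠ 0) (hsum : a + b + c = 0) :
    c / b - b / c ≠ a / c - c / a := by
  intro h
  have hc_eq : c = -(a + b) := by linear_combination hsum
  field_simp at h
  have hfactor : (a + b) * (a ^ 2 + a * b + b ^ 2) = 0 := by
    subst hc_eq; linear_combination h
  rcases mul_eq_zero.mp hfactor with hab | hq
  · exact hc (by linear_combination hsum - hab)
  · exact (sq_add_mul_add_sq_pos b ha).ne' hq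

theorem div_neg_mul_add_div_mul {K : Type*} [Field K] (x y t : K) :
    y / -(x * t) + x / (y * t) = (x / y - y / x) / t := by
  ring

theorem triangle_system_contradiction_general
    (Γ₁ Γ₂ Γ₃ : ℝ) (h1 : Γ₁ ≠ 0) (h2 : Γ₂ ≠ 0) (h3 : Γ₃ ≠ 0)
    (hsum : Γ₁ + Γ₂ + Γ₃ = 0) (t : ℂ) (ht : t ≠ 0)
    (w12 w23 w31 w21 w32 w13 : ℂ)
    (h12 : w12 = (Γ₃ : ℂ) * t) (h23 : w23 = (Γ₁ : ℂ) * t) (h31 : w31 = (Γ₂ : ℂ) * t)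
    (h21 : w21 = -w12) (h32 : w32 = -w23) :
    ¬ ((Γ₂ : ℂ) / w21 + (Γ₃ : ℂ) / w31 = (Γ₁ : ℂ) / w12 + (Γ₃ : ℂ) / w32 ∧
       (Γ₁ : ℂ) / w12 + (Γ₃ : ℂ) / w32 = (Γ₁ : ℂ) / w13 + (Γ₂ : ℂ) / w23) := by
  rintro ⟨heq, -⟩
  subst h21 h32 h12 h23 h31
  rw [div_neg_mul_add_div_mul, add_comm, div_neg_mul_add_div_mul] at heq
  have hreal : Γ₃ / Γ₂ - Γ₂ / Γ₃ = Γ₁ / Γ₃ - Γ₃ / Γ₁ := by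
    exact_mod_cast (div_left_inj' ht).mp heq
  exact div_sub_div_ne_div_sub_div h1 h2 h3 hsum hreal

/-- The system-level contradiction in the proof of Proposition 4.7: with
w₁₂ = Γ₃t, w₂₃ = Γ₁t, w₃₁ = Γ₂t (t ≠ 0) and w_{kj} = −w_{jk}, the three quantities
Γ₂/w₂₁ + Γ₃/w₃₁, Γ₁/w₁₂ + Γ₃/w₃₂, Γ₁/w₁₃ + Γ₂/w₂₃ cannot all be equal when
Γ₁ + Γ₂ + Γ₃ = 0. -/
theorem triangle_system_contradiction
    (Γ₁ Γ₂ Γ₃ : ℝ) (h1 : Γ₁ ≠ 0) (h2 : Γ₂ ≠ 0) (h3 : Γ₃ ≠ 0)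
    (hsum : Γ₁ + Γ₂ + Γ₃ = 0) (t : ℂ) (ht : t ≠ 0)
    (w12 w23 w31 w21 w32 w13 : ℂ)
    (h12 : w12 = (Γ₃ : ℂ) * t) (h23 : w23 = (Γ₁ : ℂ) * t) (h31 : w31 = (Γ₂ : ℂ) * t)
    (h21 : w21 = -w12) (h32 : w32 = -w23) (h13 : w13 = -w31) :
    ¬ ((Γ₂ : ℂ) / w21 + (Γ₃ : ℂ) / w31 = (Γ₁ : ℂ) / w12 + (Γ₃ : ℂ) / w32 ∧
       (Γ₁ : ℂ) / w12 + (Γ₃ : ℂ) / w32 = (Γ₁ : ℂ) / w13 + (Γ₂ : ℂ) / w23) :=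
  triangle_system_contradiction_general Γ₁ Γ₂ Γ₃ h1 h2 h3 hsum t ht w12 w23 w31 w21 w32 w13 h12 h23
    h31 h21 h32
end
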